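/- arXiv:2208.06141 — 2 statements merged into one kernel-verified Lean document; each statement's English description precedes it below -/
import Mathlib

section
/- Let f be holomorphic on the closed disc |z - a| ≤ R with f(a) ≠ 0 and f nonvanishing on the circle |z - a| = R. Let ρ_j = a + r_j e^{iθ_j} denote the zeros of f in the open disc, with multiplicities n_j. Then Re(f'(a)/f(a)) = -∑_j n_j (1/r_j - r_j/R²) cos θ_j + (1/(πR)) ∫₀^{2π} cos θ · log|f(a + R e^{iθ})| dθ. -/
/-!
Write `f = P g` with `P z = ∏ (z - ρ_j) ^ n_j`. On the circle `|z - a| = R` the factor `z - ρ_j`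
has the same modulus as `(R ^ 2 - conj (ρ_j - a) (z - a)) / R`, which has no zero in the closed
disc; so on the circle `log |f| = log |G|` for a zero-free holomorphic `G`. For such `G`, an
integration by parts turns `∫ cos φ log |G (a + R e^{iφ})| dφ` into
`-∫ sin φ Re (i R e^{iφ} G'/G) dφ`, and writing `sin φ` through `(z - a) / R` and `R / (z - a)`
this is a sum of two Cauchy integrals, equal to `π R Re (G'/G) (a)`. The zero terms come from
comparing the logarithmic derivatives of `f` and `G` at `a`.
-/

open Complex Real Metric ComplexConjugate

theorem HasDerivAt.log_norm {w : ℝ → ℂ} {w' : ℂ} {t : ℝ} (hw : HasDerivAt w w' t)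
    (h0 : w t ≠ 0) : HasDerivAt (fun s => Real.log ‖w s‖) (w' / w t).re t := by
  have hsq : (fun s => Real.log ‖w s‖) = fun s => Real.log (‖w s‖ ^ 2) / 2 := by
    funext s
    rw [Real.log_pow]
    ring
  rw [hsq]
  refine ((hw.norm_sq.log (by positivity)).div_const 2).congr_deriv ?_
  rw [Complex.inner, Complex.div_re, ← Complex.normSq_eq_norm_sq]
  simp only [Complex.mul_re, Complex.conj_re, Complex.conj_im]
  ring

theorem integral_sin_smul_deriv_circleMap_smul {E : Type*} [NormedAddCommGroup E]
    [NormedSpace ℂ E] [CompleteSpace E] {q : ℂ → E} {c : ℂ} {R : ℝ} (hR : 0 < R)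
    (hq : DiffContOnCl ℂ q (ball c R)) :
    ∫ φ in (0 : ℝ)..(2 * π), (Real.sin φ : ℂ) • deriv (circleMap c R) φ • q (circleMap c R φ)
      = -((π * R : ℝ) : ℂ) • q c := by
  have hR0 : (R : ℂ) ≠ 0 := ofReal_ne_zero.mpr hR.ne'
  have hsin : ∀ φ : ℝ, (Real.sin φ : ℂ) =
      (2 * I * R)⁻¹ * (circleMap c R φ - c) - R / (2 * I) * (circleMap c R φ - c)⁻¹ := by
    intro φ
    rw [ofReal_sin, Complex.sin, circleMap_sub_center, circleMap_zero, neg_mul, Complex.exp_neg]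
    field_simp
    ring_nf
    rw [I_sq]
    ring
  have hid : DiffContOnCl ℂ (fun z => z - c) (ball c R) :=
    (differentiable_id.sub_const c).diffContOnCl
  have hcont : ContinuousOn q (sphere c R) :=
    hq.continuousOn.mono (by rw [closure_ball c hR.ne']; exact sphere_subset_closedBall)
  have hcont₁ : ContinuousOn (fun z => (z - c) • q z) (sphere c R) :=
    (continuous_id.sub continuous_const).continuousOn.smul hcont
  have hcont₂ : ContinuousOn (fun z => (z - c)⁻¹ • q z) (sphere c R) :=
    ((continuous_id.sub continuous_const).continuousOn.inv₀
      fun z hz => sub_ne_zero.mpr (ne_of_mem_sphere hz hR.ne')).smul hcont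
  calc ∫ φ in (0 : ℝ)..(2 * π), (Real.sin φ : ℂ) • deriv (circleMap c R) φ • q (circleMap c R φ)
      = ∮ z in C(c, R), ((2 * I * R)⁻¹ • ((z - c) • q z) - (R / (2 * I)) • ((z - c)⁻¹ • q z)) := by
        refine intervalIntegral.integral_congr fun φ _ => ?_
        rw [hsin φ]
        simp only [smul_sub, smul_smul]
        rw [← sub_smul]
        congr 1
        ring
    _ = (2 * I * R)⁻¹ • (∮ z in C(c, R), (z - c) • q z)
          - (R / (2 * I)) • ∮ z in C(c, R), (z - c)⁻¹ • q z := by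
        rw [circleIntegral.integral_sub (f := fun z => (2 * I * R)⁻¹ • ((z - c) • q z))
          (g := fun z => (R / (2 * I)) • ((z - c)⁻¹ • q z))
          ((continuousOn_const.smul hcont₁).circleIntegrable hR.le)
          ((continuousOn_const.smul hcont₂).circleIntegrable hR.le),
          circleIntegral.integral_smul, circleIntegral.integral_smul]
    _ = -((π * R : ℝ) : ℂ) • q c := by
        rw [(hid.smul hq).circleIntegral_eq_zero hR.le,
          hq.circleIntegral_sub_inv_smul (mem_ball_self hR), smul_zero, zero_sub, smul_smul, ← neg_smul]
        congr 1
        push_cast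
        field_simp

theorem integral_cos_mul_log_norm_circleMap {u : ℂ → ℂ} {c : ℂ} {R : ℝ} (hR : 0 < R)
    (hu : AnalyticOnNhd ℂ u (closedBall c R)) (hu0 : ∀ z ∈ closedBall c R, u z ≠ 0) :
    ∫ φ in (0 : ℝ)..(2 * π), Real.cos φ * Real.log ‖u (circleMap c R φ)‖
      = π * R * (logDeriv u c).re := by
  set q := logDeriv u
  have hmem : ∀ φ, circleMap c R φ ∈ closedBall c R := circleMap_mem_closedBall c hR.le
  have hq : AnalyticOnNhd ℂ q (closedBall c R) := fun z hz =>
    (hu.deriv z hz).div (hu z hz) (hu0 z hz)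
  have hq_cont : Continuous fun φ => q (circleMap c R φ) :=
    continuous_iff_continuousAt.mpr fun φ =>
      (hq _ (hmem φ)).continuousAt.comp (continuous_circleMap c R).continuousAt
  have hderiv : ∀ φ, HasDerivAt (fun t => Real.log ‖u (circleMap c R t)‖)
      (deriv (circleMap c R) φ * q (circleMap c R φ)).re φ := by
    intro φ
    have hw := ((hu _ (hmem φ)).differentiableAt.hasDerivAt).comp φ
      (hasDerivAt_circleMap c R φ)
    refine (hw.log_norm (hu0 _ (hmem φ))).congr_deriv ?_
    simp only [deriv_circleMap, q, logDeriv_apply, Function.comp_apply]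
    ring_nf
  have hderiv_cont : Continuous fun φ => (deriv (circleMap c R) φ * q (circleMap c R φ)).re := by
    simp only [deriv_circleMap]
    exact continuous_re.comp (((continuous_circleMap 0 R).mul continuous_const).mul hq_cont)
  have hparts := intervalIntegral.integral_mul_deriv_eq_deriv_mul (a := 0) (b := 2 * π)
    (fun φ _ => Real.hasDerivAt_sin φ) (fun φ _ => hderiv φ)
    (Real.continuous_cos.intervalIntegrable _ _) (hderiv_cont.intervalIntegrable _ _)
  have hsin := integral_sin_smul_deriv_circleMap_smul hR
    (hq.differentiableOn.diffContOnCl_ball subset_rfl)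
  rw [Real.sin_zero, Real.sin_two_pi, zero_mul, zero_mul, sub_zero, zero_sub] at hparts
  have hre : ∫ φ in (0 : ℝ)..(2 * π),
      Real.sin φ * (deriv (circleMap c R) φ * q (circleMap c R φ)).re = -(π * R) * (q c).re := by
    have hint : IntervalIntegrable
        (fun φ => (Real.sin φ : ℂ) • deriv (circleMap c R) φ • q (circleMap c R φ))
        MeasureTheory.volume 0 (2 * π) := by
      simp only [deriv_circleMap, smul_eq_mul]
      exact ((continuous_ofReal.comp Real.continuous_sin).mul
        (((continuous_circleMap 0 R).mul continuous_const).mul hq_cont)).intervalIntegrable _ _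
    have := intervalIntegral.intervalIntegral_re hint
    rw [hsin] at this
    simp only [smul_eq_mul, RCLike.re_to_complex, neg_mul, neg_re, re_ofReal_mul] at this
    rw [this, neg_mul]
  linarith

theorem logDeriv_prod_pow_mul {ι 𝕜 𝕜' : Type*} [NontriviallyNormedField 𝕜]
    [NontriviallyNormedField 𝕜'] [NormedAlgebra 𝕜 𝕜'] (s : Finset ι) {p : ι → 𝕜 → 𝕜'}
    (n : ι → ℕ) {g : 𝕜 → 𝕜'} {x : 𝕜} (hp : ∀ i ∈ s, DifferentiableAt 𝕜 (p i) x)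
    (hp0 : ∀ i ∈ s, p i x ≠ 0) (hg : DifferentiableAt 𝕜 g x) (hg0 : g x ≠ 0) :
    logDeriv (fun z => (∏ i ∈ s, p i z ^ n i) * g z) x
      = ∑ i ∈ s, n i * logDeriv (p i) x + logDeriv g x := by
  have hpow0 : ∀ i ∈ s, p i x ^ n i ≠ 0 := fun i hi => pow_ne_zero _ (hp0 i hi)
  rw [logDeriv_mul (f := fun z => ∏ i ∈ s, p i z ^ n i) x (Finset.prod_ne_zero_iff.mpr hpow0) hg0
      (DifferentiableAt.fun_finsetProd fun i hi => (hp i hi).pow _) hg,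
    logDeriv_prod (f := fun i z => p i z ^ n i) hpow0 fun i hi => (hp i hi).fun_pow _]
  exact congrArg (· + _) (Finset.sum_congr rfl fun i hi => logDeriv_fun_pow (hp i hi) _)

theorem logDeriv_prod_pow_sub_mul {ι 𝕜 : Type*} [NontriviallyNormedField 𝕜] (s : Finset ι)
    {ρ : ι → 𝕜} (n : ι → ℕ) {g : 𝕜 → 𝕜} {x : 𝕜} (hρ : ∀ i ∈ s, x ≠ ρ i)
    (hg : DifferentiableAt 𝕜 g x) (hg0 : g x ≠ 0) :
    logDeriv (fun z => (∏ i ∈ s, (z - ρ i) ^ n i) * g z) x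
      = ∑ i ∈ s, n i * (x - ρ i)⁻¹ + logDeriv g x := by
  rw [logDeriv_prod_pow_mul (p := fun i z => z - ρ i) s n
    (fun i _ => differentiableAt_id.sub_const _) (fun i hi => sub_ne_zero.mpr (hρ i hi)) hg hg0]
  simp [logDeriv_apply]

/-- The linear factor vanishing at the inversion `a + R ^ 2 / conj (ρ - a)` of `ρ` in the circle
`‖z - a‖ = R`. -/
noncomputable def reflectedLinearFactor (a : ℂ) (R : ℝ) (ρ z : ℂ) : ℂ :=
  (R ^ 2 - conj (ρ - a) * (z - a)) / R

theorem differentiable_reflectedLinearFactor (a : ℂ) (R : ℝ) (ρ : ℂ) :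
    Differentiable ℂ (reflectedLinearFactor a R ρ) := by
  unfold reflectedLinearFactor
  fun_prop

theorem norm_reflectedLinearFactor_of_mem_sphere {a ρ z : ℂ} {R : ℝ} (hR : R ≠ 0)
    (hz : z ∈ sphere a R) : ‖reflectedLinearFactor a R ρ z‖ = ‖z - ρ‖ := by
  have hza : ‖z - a‖ = R := mem_sphere_iff_norm.mp hz
  have hR2 : (R : ℂ) ^ 2 = (z - a) * conj (z - a) := by
    rw [mul_conj, normSq_eq_norm_sq, hza]
    push_cast
    ring
  have hnum : (R : ℂ) ^ 2 - conj (ρ - a) * (z - a) = (z - a) * conj (z - ρ) := by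
    rw [hR2, map_sub, map_sub, map_sub]
    ring
  rw [reflectedLinearFactor, hnum, norm_div, norm_mul, norm_conj, hza, norm_real,
    Real.norm_of_nonneg (hza ▸ norm_nonneg _)]
  field_simp

theorem reflectedLinearFactor_ne_zero {a ρ z : ℂ} {R : ℝ} (hρ : ρ ∈ ball a R)
    (hz : z ∈ closedBall a R) : reflectedLinearFactor a R ρ z ≠ 0 := by
  have hR : 0 < R := pos_of_mem_ball hρ
  have hlt : ‖conj (ρ - a) * (z - a)‖ < ‖(R : ℂ) ^ 2‖ := by
    rw [norm_mul, norm_conj, norm_pow, norm_real, Real.norm_of_nonneg hR.le, sq]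
    calc ‖ρ - a‖ * ‖z - a‖ ≤ ‖ρ - a‖ * R :=
          mul_le_mul_of_nonneg_left (mem_closedBall_iff_norm.mp hz) (norm_nonneg _)
      _ < R * R := mul_lt_mul_of_pos_right (mem_ball_iff_norm.mp hρ) hR
  refine div_ne_zero (sub_ne_zero.mpr fun h => hlt.ne ?_) (ofReal_ne_zero.mpr hR.ne')
  rw [h]

theorem logDeriv_reflectedLinearFactor_center {a : ℂ} {R : ℝ} (hR : R ≠ 0) (ρ : ℂ) :
    logDeriv (reflectedLinearFactor a R ρ) a = -conj (ρ - a) / R ^ 2 := by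
  have hR' : (R : ℂ) ≠ 0 := ofReal_ne_zero.mpr hR
  have hd : HasDerivAt (reflectedLinearFactor a R ρ) (-conj (ρ - a) / R) a :=
    ((((hasDerivAt_id a).sub_const a).const_mul (conj (ρ - a))).const_sub
      ((R : ℂ) ^ 2) |>.div_const (R : ℂ)).congr_deriv (by ring)
  rw [logDeriv_apply, hd.deriv, reflectedLinearFactor]
  field_simp
  simp

theorem integral_cos_mul_log_norm_prod_pow_sub_mul {ι : Type*} (s : Finset ι) {ρ : ι → ℂ}
    (n : ι → ℕ) {g : ℂ → ℂ} {a : ℂ} {R : ℝ} (hR : 0 < R) (hρ : ∀ j ∈ s, ρ j ∈ ball a R)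
    (hg : AnalyticOnNhd ℂ g (closedBall a R)) (hg0 : ∀ z ∈ closedBall a R, g z ≠ 0) :
    ∫ φ in (0 : ℝ)..(2 * π), Real.cos φ *
        Real.log ‖(∏ j ∈ s, (circleMap a R φ - ρ j) ^ n j) * g (circleMap a R φ)‖
      = π * R * (logDeriv g a - ∑ j ∈ s, n j * conj (ρ j - a) / R ^ 2).re := by
  set G : ℂ → ℂ := fun z => (∏ j ∈ s, reflectedLinearFactor a R (ρ j) z ^ n j) * g z
  have hG : AnalyticOnNhd ℂ G (closedBall a R) := fun z hz => by
    have := fun j => (differentiable_reflectedLinearFactor a R (ρ j)).analyticAt z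
    have := hg z hz
    fun_prop
  have hG0 : ∀ z ∈ closedBall a R, G z ≠ 0 := fun z hz =>
    mul_ne_zero (Finset.prod_ne_zero_iff.mpr fun j hj =>
      pow_ne_zero _ (reflectedLinearFactor_ne_zero (hρ j hj) hz)) (hg0 z hz)
  have ha : a ∈ closedBall a R := mem_closedBall_self hR.le
  have hG_log : logDeriv G a = logDeriv g a - ∑ j ∈ s, n j * conj (ρ j - a) / R ^ 2 := by
    rw [logDeriv_prod_pow_mul _ _ (fun j _ => differentiable_reflectedLinearFactor a R (ρ j) a)
      (fun j hj => reflectedLinearFactor_ne_zero (hρ j hj) ha) (hg a ha).differentiableAt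
      (hg0 a ha)]
    simp only [logDeriv_reflectedLinearFactor_center hR.ne', neg_div, mul_neg, mul_div_assoc,
      Finset.sum_neg_distrib]
    ring
  rw [← hG_log, ← integral_cos_mul_log_norm_circleMap hR hG hG0]
  refine intervalIntegral.integral_congr fun φ _ => ?_
  have hz := circleMap_mem_sphere a hR.le φ
  simp only [G, norm_mul, norm_prod, norm_pow, norm_reflectedLinearFactor_of_mem_sphere hR.ne' hz]

theorem re_inv_neg_add_conj_div_sq (r θ R : ℝ) :
    ((-((r : ℂ) * exp (θ * I)))⁻¹ + conj ((r : ℂ) * exp (θ * I)) / R ^ 2).re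
      = -((1 / r - r / R ^ 2) * Real.cos θ) := by
  have hinv : ((r : ℂ) * exp (θ * I))⁻¹ = (r⁻¹ : ℝ) * exp ((-θ : ℝ) * I) := by
    rw [mul_inv, ← Complex.exp_neg]
    push_cast
    ring_nf
  have hconj : conj ((r : ℂ) * exp (θ * I)) / R ^ 2 = (r / R ^ 2 : ℝ) * exp ((-θ : ℝ) * I) := by
    rw [map_mul, conj_ofReal, ← exp_conj, map_mul, conj_ofReal, conj_I]
    push_cast
    ring_nf
  rw [inv_neg, hinv, hconj, add_re, neg_re, re_ofReal_mul, re_ofReal_mul, exp_ofReal_mul_I_re,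
    Real.cos_neg]
  ring

/-- The zeros of `f` in the disc are encoded by the factorization
`f z = (∏ j, (z - ρ j) ^ n j) * g z` with `g` analytic and zero-free on the closed disc. -/
theorem heath_brown_lemma_general (f g : ℂ → ℂ) (a : ℂ) (R : ℝ) (hR : 0 < R)
    (m : ℕ) (ρ : Fin m → ℂ) (r θ : Fin m → ℝ) (n : Fin m → ℕ)
    (hg : AnalyticOnNhd ℂ g (closedBall a R))
    (hg0 : ∀ z ∈ closedBall a R, g z ≠ 0)
    (hfact : ∀ z ∈ closedBall a R, f z = (∏ j, (z - ρ j) ^ n j) * g z)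
    (hρ : ∀ j, ρ j ∈ ball a R)
    (hρ' : ∀ j, ρ j = a + (r j : ℂ) * Complex.exp ((θ j : ℂ) * Complex.I))
    (hr : ∀ j, 0 < r j) :
    (deriv f a / f a).re =
      - (∑ j, (n j : ℝ) * (1 / r j - r j / R ^ 2) * Real.cos (θ j)) +
      (1 / (π * R)) * ∫ φ in (0 : ℝ)..(2 * π),
        Real.cos φ *
          Real.log ‖f (a + (R : ℂ) * Complex.exp ((φ : ℂ) * Complex.I))‖ := by
  have ha : a ∈ closedBall a R := mem_closedBall_self hR.le
  have hf_log : logDeriv f a = ∑ j, n j * (a - ρ j)⁻¹ + logDeriv g a := by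
    have hf_eq := Filter.eventuallyEq_of_mem (closedBall_mem_nhds a hR) hfact
    rw [(logDeriv_congr_nhds hf_eq).eq_of_nhds]
    refine logDeriv_prod_pow_sub_mul _ _ (fun j _ => ?_) (hg a ha).differentiableAt (hg0 a ha)
    simp [hρ' j, (hr j).ne', Complex.exp_ne_zero]
  have hintegral : ∫ φ in (0 : ℝ)..(2 * π), Real.cos φ * Real.log ‖f (circleMap a R φ)‖
      = π * R * (logDeriv g a - ∑ j, n j * conj (ρ j - a) / R ^ 2).re := by
    rw [← integral_cos_mul_log_norm_prod_pow_sub_mul _ _ hR (fun j _ => hρ j) hg hg0]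
    exact intervalIntegral.integral_congr fun φ _ => by
      rw [hfact _ (circleMap_mem_closedBall a hR.le φ)]
  have hzero : ∀ j, (n j * ((a - ρ j)⁻¹ + conj (ρ j - a) / R ^ 2)).re
      = -((n j : ℝ) * (1 / r j - r j / R ^ 2) * Real.cos (θ j)) := fun j => by
    rw [hρ' j, sub_add_cancel_left, add_sub_cancel_left, ← ofReal_natCast, re_ofReal_mul,
      re_inv_neg_add_conj_div_sq]
    ring
  have hsplit : ∑ j, n j * (a - ρ j)⁻¹ + logDeriv g a = logDeriv g a
      - ∑ j, n j * conj (ρ j - a) / R ^ 2 + ∑ j, n j * ((a - ρ j)⁻¹ + conj (ρ j - a) / R ^ 2) := by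
    simp only [mul_add, Finset.sum_add_distrib, mul_div_assoc]
    ring
  change (logDeriv f a).re = _ + 1 / (π * R) * ∫ φ in (0 : ℝ)..(2 * π),
    Real.cos φ * Real.log ‖f (circleMap a R φ)‖
  rw [hintegral, ← mul_assoc, one_div_mul_cancel (by positivity), one_mul, hf_log, hsplit,
    add_re, re_sum, Finset.sum_congr rfl fun j _ => hzero j, Finset.sum_neg_distrib, add_comm]

/-- Heath-Brown's lemma: the zeros of `f` in the disc are encoded by the factorization
`f z = (∏ j, (z - ρ j) ^ n j) * g z` with `g` analytic and nonvanishing on the closed disc. -/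
theorem heath_brown_lemma (f g : ℂ → ℂ) (a : ℂ) (R : ℝ) (hR : 0 < R)
    (m : ℕ) (ρ : Fin m → ℂ) (r θ : Fin m → ℝ) (n : Fin m → ℕ)
    (hf : AnalyticOnNhd ℂ f (closedBall a R))
    (hg : AnalyticOnNhd ℂ g (closedBall a R))
    (hg0 : ∀ z ∈ closedBall a R, g z ≠ 0)
    (hfact : ∀ z ∈ closedBall a R, f z = (∏ j, (z - ρ j) ^ n j) * g z)
    (hρ : ∀ j, ρ j ∈ ball a R)
    (hρ' : ∀ j, ρ j = a + (r j : ℂ) * Complex.exp ((θ j : ℂ) * Complex.I))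
    (hr : ∀ j, 0 < r j)
    (hfa : f a ≠ 0) :
    (deriv f a / f a).re =
      - (∑ j, (n j : ℝ) * (1 / r j - r j / R ^ 2) * Real.cos (θ j)) +
      (1 / (π * R)) * ∫ φ in (0 : ℝ)..(2 * π),
        Real.cos φ *
          Real.log ‖f (a + (R : ℂ) * Complex.exp ((φ : ℂ) * Complex.I))‖ :=
  heath_brown_lemma_general f g a R hR m ρ r θ n hg hg0 hfact hρ hρ' hr
end

section
/- Let H = 2e^{e²} and suppose 1/|ζ(σ+it)| ≤ 4/(σ − 1/2) for 1/2 < σ ≤ 3/2 and 0 ≤ t ≤ H. Then for x ≥ 1, (1/2π) · x^{-1/2} ∫_{-H}^{H} |ζ(−1/2+it)|^{-1} / √(1/4 + t²) dt < 41.155/√x. -/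
/-!
Put `w = 1/2 - it`. The functional equation at `s = w + 1`, together with
`Γ(w + 1) = w Γ(w)` and `cos(π(w + 1)/2) = -sin(πw/2)`, gives
`|ζ(-1/2 + it)| = |w| / (2π) · |ζ(3/2 + it)|`: on the critical line `conj w = 1 - w`, so the
reflection formula yields `|Γ(w) sin(πw/2)|² = Γ(w) Γ(1 - w) sin(πw/2) cos(πw/2) = π/2`.
The hypothesis at `σ = 3/2` gives `1/|ζ(3/2 + it)| ≤ 4`, so the integrand is at most
`8π / (1/4 + t²)`, whose integral over all of `ℝ` is `16π²`. The left side is therefore at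
most `8π / √x < 25.14 / √x`.
-/

open Complex Real ComplexConjugate

lemma integral_inv_sq_add_sq_lt (a b : ℝ) {c : ℝ} (hc : 0 < c) :
    ∫ x in a..b, (c ^ 2 + x ^ 2)⁻¹ < π / c := by
  rw [integral_inv_sq_add_sq hc.ne', inv_mul_eq_div]
  gcongr
  linarith [arctan_lt_pi_div_two (b / c), neg_pi_div_two_lt_arctan (a / c)]

lemma norm_Gamma_mul_sin_sq {w : ℂ} (hw : w.re = 1 / 2) :
    ‖Gamma w * sin (π * w / 2)‖ ^ 2 = π / 2 := by
  have hconj : conj w = 1 - w := Complex.ext (by simp [hw]; norm_num) (by simp)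
  have hsin : sin (π * w) ≠ 0 := by
    refine Complex.sin_ne_zero_iff.2 fun k hk => ?_
    have hk' : (k : ℝ) * π = 2⁻¹ * π := by simpa [hw, mul_comm] using (congrArg re hk).symm
    have h2k : 2 * k = 1 := by
      exact_mod_cast (by linarith [mul_right_cancel₀ Real.pi_ne_zero hk'] : (2 * k : ℝ) = 1)
    omega
  have h : ((‖Gamma w * sin (π * w / 2)‖ ^ 2 : ℝ) : ℂ) = π / 2 := by
    rw [ofReal_pow, ← Complex.mul_conj', map_mul, ← Complex.Gamma_conj, ← Complex.sin_conj,
      map_div₀, map_mul, conj_ofReal, hconj, map_ofNat]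
    calc Gamma w * sin (π * w / 2) * (Gamma (1 - w) * sin (π * (1 - w) / 2))
        = Gamma w * Gamma (1 - w) * (2 * sin (π * w / 2) * cos (π * w / 2)) / 2 := by
          rw [show (π : ℂ) * (1 - w) / 2 = π / 2 - π * w / 2 by ring,
            Complex.sin_pi_div_two_sub]
          ring
      _ = π / sin (π * w) * sin (π * w) / 2 := by
          rw [Complex.Gamma_mul_Gamma_one_sub, ← Complex.sin_two_mul]
          ring_nf
      _ = π / 2 := by field_simp
  exact_mod_cast h

lemma norm_riemannZeta_neg {w : ℂ} (hw : w.re = 1 / 2) :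
    ‖riemannZeta (-w)‖ = ‖w‖ / (2 * π) * ‖riemannZeta (w + 1)‖ := by
  have hw0 : w ≠ 0 := by rintro rfl; norm_num at hw
  have hnat : ∀ n : ℕ, w + 1 ≠ -n := by
    intro n h
    have h := congrArg re h
    simp only [add_re, hw, one_div, one_re, neg_re, natCast_re] at h
    linarith [(n.cast_nonneg : (0 : ℝ) ≤ n)]
  have hone : w + 1 ≠ 1 := by simpa using hw0
  have hfe := riemannZeta_one_sub hnat hone
  rw [sub_add_cancel_right, Complex.Gamma_add_one w hw0,
    show (π : ℂ) * (w + 1) / 2 = π * w / 2 + π / 2 by ring, Complex.cos_add_pi_div_two] at hfe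
  have hGs : ‖Gamma w * sin (π * w / 2)‖ = √(2 * π) / 2 := by
    rw [← Real.sqrt_sq (norm_nonneg _), norm_Gamma_mul_sin_sq hw,
      show π / 2 = 2 * π / 2 ^ 2 by ring, Real.sqrt_div' _ (by positivity),
      Real.sqrt_sq two_pos.le]
  have hpow : ‖(2 * (π : ℂ)) ^ (-(w + 1))‖ = (2 * π) ^ (-(3 / 2) : ℝ) := by
    rw [show (2 * (π : ℂ)) = ((2 * π : ℝ) : ℂ) by push_cast; ring,
      Complex.norm_cpow_eq_rpow_re_of_pos (by positivity)]
    norm_num [hw]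
  calc ‖riemannZeta (-w)‖
      = 2 * ‖(2 * (π : ℂ)) ^ (-(w + 1))‖ * ‖w‖ * ‖Gamma w * sin (π * w / 2)‖
          * ‖riemannZeta (w + 1)‖ := by
        rw [hfe]; simp only [norm_mul, norm_neg, Complex.norm_ofNat]; ring
    _ = ‖w‖ / (2 * π) * ‖riemannZeta (w + 1)‖ := by
        have h2π : (2 * π) ^ (-(3 / 2) : ℝ) * (2 * π) ^ (1 / 2 : ℝ) = (2 * π)⁻¹ := by
          rw [← Real.rpow_add (by positivity)]; norm_num [Real.rpow_neg_one]
        rw [hpow, hGs, Real.sqrt_eq_rpow]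
        linear_combination ‖w‖ * ‖riemannZeta (w + 1)‖ * h2π

lemma norm_riemannZeta_conj (s : ℂ) : ‖riemannZeta (conj s)‖ = ‖riemannZeta s‖ := by
  rw [riemannZeta_conj, Complex.norm_conj]

lemma norm_riemannZeta_add_abs_mul_I (σ t : ℝ) :
    ‖riemannZeta (σ + |t| * I)‖ = ‖riemannZeta (σ + t * I)‖ := by
  rcases abs_choice t with h | h <;> rw [h]
  rw [← norm_riemannZeta_conj]
  simp

lemma norm_riemannZeta_neg_half_add_mul_I (t : ℝ) :
    ‖riemannZeta (-(1 / 2 : ℝ) + t * I)‖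
      = √(1 / 4 + t ^ 2) / (2 * π) * ‖riemannZeta ((3 / 2 : ℝ) + t * I)‖ := by
  have hnorm : ‖(1 / 2 - t * I : ℂ)‖ = √(1 / 4 + t ^ 2) := by
    rw [show (1 / 2 - t * I : ℂ) = (1 / 2 : ℝ) + (-t : ℝ) * I by push_cast; ring,
      Complex.norm_add_mul_I]
    norm_num
  have hconj : (1 / 2 - t * I : ℂ) + 1 = conj ((3 / 2 : ℝ) + t * I) := by
    rw [map_add, map_mul, conj_ofReal, conj_ofReal, conj_I]
    push_cast; ring
  rw [show -((1 / 2 : ℝ) : ℂ) + t * I = -(1 / 2 - t * I) by push_cast; ring,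
    norm_riemannZeta_neg (by simp), hnorm, hconj, norm_riemannZeta_conj]

lemma inv_norm_riemannZeta_neg_half_add_mul_I_div (t : ℝ) :
    ‖riemannZeta (-(1 / 2 : ℝ) + t * I)‖⁻¹ / √(1 / 4 + t ^ 2)
      = 2 * π * ((1 / 2) ^ 2 + t ^ 2)⁻¹ * ‖riemannZeta ((3 / 2 : ℝ) + t * I)‖⁻¹ := by
  rw [norm_riemannZeta_neg_half_add_mul_I, mul_inv, inv_div, div_mul_eq_mul_div, div_div,
    Real.mul_self_sqrt (by positivity)]
  ring

lemma integral_inv_norm_riemannZeta_neg_half_add_mul_I_div_le {H M : ℝ} (hH : 0 ≤ H)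
    (hM : 0 ≤ M)
    (hbound : ∀ t ∈ Set.Ioc (-H) H, ‖riemannZeta ((3 / 2 : ℝ) + t * I)‖⁻¹ ≤ M) :
    ∫ t in (-H)..H, ‖riemannZeta (-(1 / 2 : ℝ) + t * I)‖⁻¹ / √(1 / 4 + t ^ 2)
      ≤ 4 * π ^ 2 * M := calc
  _ ≤ ∫ t in (-H)..H, 2 * π * M * ((1 / 2) ^ 2 + t ^ 2)⁻¹ := by
      have hpoint : ∀ t ∈ Set.Ioc (-H) H,
          ‖riemannZeta (-(1 / 2 : ℝ) + t * I)‖⁻¹ / √(1 / 4 + t ^ 2)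
            ≤ 2 * π * M * ((1 / 2) ^ 2 + t ^ 2)⁻¹ := fun t ht => by
        rw [inv_norm_riemannZeta_neg_half_add_mul_I_div]
        calc _ ≤ 2 * π * ((1 / 2) ^ 2 + t ^ 2)⁻¹ * M := by gcongr; exact hbound t ht
          _ = _ := by ring
      rw [intervalIntegral.integral_of_le (by linarith),
        intervalIntegral.integral_of_le (by linarith)]
      refine MeasureTheory.setIntegral_mono_of_nonneg (fun t _ => by positivity) hpoint ?_
      exact Continuous.integrableOn_Ioc (by fun_prop (disch := intro t; positivity))
  _ = 2 * π * M * ∫ t in (-H)..H, ((1 / 2) ^ 2 + t ^ 2)⁻¹ :=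
      intervalIntegral.integral_const_mul _ _
  _ ≤ 2 * π * M * (π / (1 / 2)) := by
      gcongr
      exact (integral_inv_sq_add_sq_lt _ _ one_half_pos).le
  _ = 4 * π ^ 2 * M := by ring

theorem I4_bound (x : ℝ) (hx : 1 ≤ x)
    (hzeta : ∀ σ t : ℝ, 1 / 2 < σ → σ ≤ 3 / 2 → 0 ≤ t → t ≤ 2 * Real.exp (Real.exp 2) →
      1 / ‖riemannZeta (σ + t * Complex.I)‖ ≤ 4 / (σ - 1 / 2)) :
    (1 / (2 * π)) * x ^ (-(1 : ℝ) / 2) *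
        ∫ t in (-(2 * Real.exp (Real.exp 2)))..(2 * Real.exp (Real.exp 2)),
          (‖riemannZeta (-(1 / 2 : ℝ) + t * Complex.I)‖)⁻¹ /
            Real.sqrt (1 / 4 + t ^ 2) <
      41.155 / Real.sqrt x := by
  set H := 2 * Real.exp (Real.exp 2)
  have hinv : ∀ t ∈ Set.Ioc (-H) H, ‖riemannZeta ((3 / 2 : ℝ) + t * I)‖⁻¹ ≤ 4 := by
    intro t ht
    have h := hzeta (3 / 2) |t| (by norm_num) le_rfl (abs_nonneg t) (abs_le.2 ⟨ht.1.le, ht.2⟩)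
    rw [norm_riemannZeta_add_abs_mul_I] at h
    norm_num at h ⊢
    exact h
  have hint :=
    integral_inv_norm_riemannZeta_neg_half_add_mul_I_div_le (by positivity) (by norm_num) hinv
  have hrpow : x ^ (-(1 : ℝ) / 2) = (√x)⁻¹ := by
    rw [neg_div, Real.rpow_neg (by linarith), Real.sqrt_eq_rpow]
  have hsx : 0 < √x := Real.sqrt_pos.2 (by linarith)
  calc (1 / (2 * π)) * x ^ (-(1 : ℝ) / 2) *
        ∫ t in (-H)..H, ‖riemannZeta (-(1 / 2 : ℝ) + t * I)‖⁻¹ / √(1 / 4 + t ^ 2)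
      ≤ (1 / (2 * π)) * x ^ (-(1 : ℝ) / 2) * (4 * π ^ 2 * 4) := by gcongr
    _ = 8 * π / √x := by rw [hrpow]; field_simp; ring
    _ < 41.155 / √x := by gcongr; linarith [Real.pi_lt_d2]
end
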